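/- Let n ≥ 4 and let f_n be the free 2-step nilpotent Lie algebra on n generators over a field k of characteristic zero, realized as the graph algebra of the complete graph K_n, with f_n = W ⊕ z where W is spanned by the vertices and z by the edges. Let δ be a nearly coboundary Lie bialgebra structure on f_n (δ|_z = 0) written as δ(v) = Σ_{α} D_α(v)∧α + Φ*(v) for v ∈ W, and assume each D_α is diagonal in the vertex basis. Then D_α = 0 for every edge α; that is, δ(W) ⊆ Λ²z, so δ(e_i) = ω_i for some ω_i ∈ Λ²z. -/

import Mathlib

open TensorProduct

set_option synthInstance.maxHeartbeats 1000000
set_option maxHeartbeats 1000000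

/-- The adjoint action of a Lie algebra `g` on `g ⊗ g`, determined by
`x · (a ⊗ b) = ⁅x,a⁆ ⊗ b + a ⊗ ⁅x,b⁆`. -/
noncomputable def tAct (k g : Type*) [CommRing k] [LieRing g] [LieAlgebra k g] (x : g) :
    g ⊗[k] g →ₗ[k] g ⊗[k] g :=
  TensorProduct.map (LieAlgebra.ad k g x) LinearMap.id
    + TensorProduct.map LinearMap.id (LieAlgebra.ad k g x)

/-- The cyclic rotation `(a⊗b)⊗c ↦ (c⊗a)⊗b` on `(g⊗g)⊗g`. -/
noncomputable def tCyc (k g : Type*) [CommRing k] [AddCommGroup g] [Module k g] :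
    (g ⊗[k] g) ⊗[k] g →ₗ[k] (g ⊗[k] g) ⊗[k] g :=
  ((TensorProduct.assoc k g g g).symm.toLinearMap).comp
    (TensorProduct.comm k (g ⊗[k] g) g).toLinearMap

/-- For submodules `P Q ⊆ g`, the image of `P ⊗ Q` in `g ⊗ g`. -/
noncomputable def tsub (k g : Type*) [CommRing k] [AddCommGroup g] [Module k g]
    (P Q : Submodule k g) : Submodule k (g ⊗[k] g) :=
  LinearMap.range (TensorProduct.map P.subtype Q.subtype)

/-- The degree (valency) of a vertex `e` in the graph with edge set `A` and
endpoint maps `src`, `tgt`. -/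
def deg {V A : Type*} [Fintype A] [DecidableEq V] (src tgt : A → V) (e : V) : ℕ :=
  (Finset.univ.filter (fun a : A => src a = e ∨ tgt a = e)).card

/-!
For vertices `e_i, e_j` joined by the edge `α`, the cocycle identity and `δ α = 0` give
`Σ_β (λ_{i,β} + λ_{j,β}) α ∧ β = 0`, so `λ_{i,β} + λ_{j,β} = 0` for every edge `β ≠ α`.
In `K_n` any two distinct vertices that are not the endpoints of `β` are joined by an edge
`α ≠ β`. As `n ≥ 4`, there are two vertices `r, s` off `β`, and the triangle formed by `r`, `s`
and an endpoint of `β` gives `2 λ_{r,β} = 0`; then `λ_{i,β} = -λ_{r,β} = 0` for all `i ≠ r`.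
-/

open LieAlgebra

noncomputable def wedge (k : Type*) {g : Type*} [CommRing k] [AddCommGroup g] [Module k g]
    (u v : g) : g ⊗[k] g :=
  u ⊗ₜ[k] v - v ⊗ₜ[k] u

theorem wedge_neg_left {k g : Type*} [CommRing k] [AddCommGroup g] [Module k g] (u v : g) :
    wedge k (-u) v = -wedge k u v := by
  simp [wedge, neg_tmul, tmul_neg]
  abel

section TensorAction

variable {k g : Type*} [CommRing k] [LieRing g] [LieAlgebra k g]

theorem tAct_tmul (x u v : g) :
    tAct k g x (u ⊗ₜ[k] v) = ⁅x, u⁆ ⊗ₜ[k] v + u ⊗ₜ[k] ⁅x, v⁆ := by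
  simp [tAct]

theorem tAct_wedge_of_mem_center (x u : g) {v : g} (hv : v ∈ center k g) :
    tAct k g x (wedge k u v) = wedge k ⁅x, u⁆ v := by
  rw [LieModule.mem_maxTrivSubmodule] at hv
  simp only [wedge, map_sub, tAct_tmul, hv x, tmul_zero, zero_tmul, add_zero, zero_add]

theorem tAct_eq_zero_of_mem_tsub {Z : Submodule k g} (hZ : Z ≤ (center k g).toSubmodule)
    (x : g) {p : g ⊗[k] g} (hp : p ∈ tsub k g Z Z) : tAct k g x p = 0 := by
  have hc : ∀ z : Z, ⁅x, (z : g)⁆ = 0 := fun z =>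
    (LieModule.mem_maxTrivSubmodule k g g _).mp (hZ z.2) x
  obtain ⟨q, rfl⟩ := hp
  induction q using TensorProduct.induction_on with
  | zero => simp
  | tmul u v => simp [tAct_tmul, hc]
  | add u v hu hv => rw [map_add, map_add, hu, hv, add_zero]

theorem tAct_sum_smul_wedge_add {ι : Type*} {Z : Submodule k g}
    (hZ : Z ≤ (center k g).toSubmodule) (s : Finset ι) (l : ι → k) (x y : g) {z : ι → g}
    (hz : ∀ i, z i ∈ center k g) {p : g ⊗[k] g} (hp : p ∈ tsub k g Z Z) :
    tAct k g x (∑ i ∈ s, l i • wedge k y (z i) + p) = ∑ i ∈ s, l i • wedge k ⁅x, y⁆ (z i) := by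
  simp only [map_add, map_sum, map_smul, tAct_wedge_of_mem_center x y (hz _),
    tAct_eq_zero_of_mem_tsub hZ x hp, add_zero]

theorem sum_add_smul_wedge_lie_eq_zero {ι : Type*} {Z : Submodule k g}
    (hZ : Z ≤ (center k g).toSubmodule) (δ : g →ₗ[k] g ⊗[k] g) {x y : g}
    (hcoc : δ ⁅x, y⁆ = tAct k g x (δ y) - tAct k g y (δ x)) (hxy : δ ⁅x, y⁆ = 0)
    (s : Finset ι) {z : ι → g} (hz : ∀ i, z i ∈ center k g) {lx ly : ι → k} {p q : g ⊗[k] g}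
    (hp : p ∈ tsub k g Z Z) (hq : q ∈ tsub k g Z Z)
    (hx : δ x = ∑ i ∈ s, lx i • wedge k x (z i) + p)
    (hy : δ y = ∑ i ∈ s, ly i • wedge k y (z i) + q) :
    ∑ i ∈ s, (lx i + ly i) • wedge k ⁅x, y⁆ (z i) = 0 := by
  rw [hxy, hx, hy, tAct_sum_smul_wedge_add hZ s _ _ _ hz hq,
    tAct_sum_smul_wedge_add hZ s _ _ _ hz hp, eq_comm, sub_eq_zero] at hcoc
  simp only [← lie_skew y x, wedge_neg_left, smul_neg, Finset.sum_neg_distrib] at hcoc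
  simp only [add_smul, Finset.sum_add_distrib, hcoc, add_neg_cancel]

end TensorAction

theorem Module.Basis.coeff_eq_zero_of_sum_smul_wedge_eq_zero {k M ι κ : Type*} [CommRing k]
    [AddCommGroup M] [Module k M] [Fintype κ] (B : Module.Basis ι k M) {e : κ → ι}
    (he : Function.Injective e) {c : κ → k} {a b : κ} (hab : a ≠ b)
    (h : ∑ γ, c γ • wedge k (B (e a)) (B (e γ)) = 0) : c b = 0 := by
  classical
  have := congrArg (fun t => (B.tensorProduct B).repr t (e a, e b)) h
  simpa [wedge, Finsupp.single_apply, he.eq_iff, hab, Ne.symm hab] using this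

theorem eq_zero_of_add_eq_zero_of_sym2_ne {k V : Type*} [CommRing k] [NoZeroDivisors k]
    [NeZero (2 : k)] [Fintype V] (hcard : 4 ≤ Fintype.card V) (p q : V) {μ : V → k}
    (h : ∀ x y, x ≠ y → s(x, y) ≠ s(p, q) → μ x + μ y = 0) : μ = 0 := by
  classical
  have hcompl : 1 < ({p, q}ᶜ : Finset V).card := by
    have := Finset.card_le_two (a := p) (b := q)
    rw [Finset.card_compl]
    omega
  obtain ⟨r, hr, s, hs, hrs⟩ := Finset.one_lt_card.mp hcompl
  simp only [Finset.mem_compl, Finset.mem_insert, Finset.mem_singleton, not_or] at hr hs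
  have hoff : ∀ x y, x ≠ y → y ≠ p → y ≠ q → μ x + μ y = 0 := fun x y hxy hp hq =>
    h x y hxy fun he => by rcases Sym2.eq_iff.mp he with ⟨-, rfl⟩ | ⟨-, rfl⟩ <;> simp_all
  have hr0 : μ r = 0 := by
    have h2 : 2 * μ r = 0 := by
      linear_combination hoff p r (Ne.symm hr.1) hr.1 hr.2 + hoff s r (Ne.symm hrs) hr.1 hr.2
        - hoff p s (Ne.symm hs.1) hs.1 hs.2
    exact (mul_eq_zero.mp h2).resolve_left two_ne_zero
  funext x
  by_cases hxr : x = r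
  · exact hxr ▸ hr0
  · simpa [hr0] using hoff x r hxr hr.1 hr.2

theorem stmt18_general (k V A N : Type*) [Field k] [CharZero k]
    [Fintype V] [Fintype A]
    [LieRing N] [LieAlgebra k N]
    (src tgt : A → V)
    (B : Module.Basis (V ⊕ A) k N)
    (hbz : ∀ (a : A) (x : N), ⁅B (Sum.inr a), x⁆ = 0)
    (hbe : ∀ a : A, ⁅B (Sum.inl (src a)), B (Sum.inl (tgt a))⁆ = B (Sum.inr a))
    -- the graph is the complete graph K_n on n ≥ 4 vertices:
    (hcomplete : ∀ i j : V, i ≠ j → ∃ a : A,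
      (src a = i ∧ tgt a = j) ∨ (src a = j ∧ tgt a = i))
    (hcard : 4 ≤ Fintype.card V)
    (Z : Submodule k N)
    (hZ : Z = Submodule.span k (Set.range fun a : A => B (Sum.inr a)))
    -- δ is a Lie bialgebra structure on n:
    (δ : N →ₗ[k] N ⊗[k] N)
    (hcoc : ∀ x y, δ ⁅x, y⁆ = tAct k N x (δ y) - tAct k N y (δ x))
    -- δ is nearly coboundary:
    (hnc : ∀ z ∈ Z, δ z = 0)
    -- δ on W has the form δ(e_i) = Σ_α λ_{i,α} e_i∧α + Φ*(e_i) (diagonal D_α's):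
    (lam : V → A → k)
    (P : V → N ⊗[k] N)
    (hP : ∀ i : V, P i ∈ tsub k N Z Z)
    (hform : ∀ i : V, δ (B (Sum.inl i))
      = ∑ a : A, lam i a • (B (Sum.inl i) ⊗ₜ[k] B (Sum.inr a)
          - B (Sum.inr a) ⊗ₜ[k] B (Sum.inl i)) + P i)
    :
    (∀ (i : V) (a : A), lam i a = 0)
    ∧ (∀ i : V, δ (B (Sum.inl i)) ∈ tsub k N Z Z) := by
  have hZc : Z ≤ (center k N).toSubmodule := hZ ▸ Submodule.span_le.mpr (by
    rintro _ ⟨a, rfl⟩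
    exact (LieModule.mem_maxTrivSubmodule k N N _).mpr fun x => by
      rw [← lie_skew, hbz, neg_zero])
  have hZmem : ∀ a, B (Sum.inr a) ∈ Z := fun a => hZ ▸ Submodule.subset_span ⟨a, rfl⟩
  have hedge : ∀ a β, a ≠ β → lam (src a) β + lam (tgt a) β = 0 := by
    intro a β hβ
    have hsum := sum_add_smul_wedge_lie_eq_zero hZc δ (hcoc _ _)
      (by rw [hbe]; exact hnc _ (hZmem a)) Finset.univ (fun γ => hZc (hZmem γ))
      (hP _) (hP _) (hform (src a)) (hform (tgt a))
    rw [hbe] at hsum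
    exact B.coeff_eq_zero_of_sum_smul_wedge_eq_zero Sum.inr_injective hβ hsum
  have hlam : ∀ i β, lam i β = 0 := by
    intro i β
    refine congrFun (eq_zero_of_add_eq_zero_of_sym2_ne (μ := (lam · β)) hcard (src β) (tgt β) ?_) i
    intro x y hxy hne
    obtain ⟨a, ⟨rfl, rfl⟩ | ⟨rfl, rfl⟩⟩ := hcomplete x y hxy
    · exact hedge a β (by rintro rfl; exact hne rfl)
    · rw [add_comm]
      exact hedge a β (by rintro rfl; exact hne Sym2.eq_swap)
  refine ⟨hlam, fun i => ?_⟩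
  simpa [hform i, hlam] using hP i

/-- let `f_n` (`n ≥ 4`) be the free 2-step nilpotent Lie algebra on `n`
generators, realized as the graph algebra of the complete graph `K_n` (every pair of
distinct vertices is joined by an edge, and there are `n ≥ 4` vertices), with
`f_n = W ⊕ z`.  If `δ` is a nearly coboundary Lie bialgebra structure on `f_n` written as
`δ(v) = Σ_α D_α(v)∧α + Φ*(v)` on `W` with each `D_α` diagonal in the vertex basis
(`D_α(e_i) = λ_{i,α} e_i`), then all `D_α = 0` (all eigenvalues vanish); that is,
`δ(W) ⊆ Λ²z`, so `δ(e_i) = ω_i` for some `ω_i ∈ Λ²z`. -/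
theorem stmt18 (k V A N : Type*) [Field k] [CharZero k]
    [Fintype V] [Fintype A] [DecidableEq V] [DecidableEq A]
    [LieRing N] [LieAlgebra k N]
    (src tgt : A → V)
    (hloop : ∀ a, src a ≠ tgt a)
    (hsimple : ∀ a b : A,
      (src a = src b ∧ tgt a = tgt b) ∨ (src a = tgt b ∧ tgt a = src b) → a = b)
    (B : Module.Basis (V ⊕ A) k N)
    (hbz : ∀ (a : A) (x : N), ⁅B (Sum.inr a), x⁆ = 0)
    (hbe : ∀ a : A, ⁅B (Sum.inl (src a)), B (Sum.inl (tgt a))⁆ = B (Sum.inr a))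
    (hbe0 : ∀ i j : V,
      (∀ a : A, ¬((src a = i ∧ tgt a = j) ∨ (src a = j ∧ tgt a = i))) →
      ⁅B (Sum.inl i), B (Sum.inl j)⁆ = 0)
    -- the graph is the complete graph K_n on n ≥ 4 vertices:
    (hcomplete : ∀ i j : V, i ≠ j → ∃ a : A,
      (src a = i ∧ tgt a = j) ∨ (src a = j ∧ tgt a = i))
    (hcard : 4 ≤ Fintype.card V)
    (Z : Submodule k N)
    (hZ : Z = Submodule.span k (Set.range fun a : A => B (Sum.inr a)))
    -- δ is a Lie bialgebra structure on n:
    (δ : N →ₗ[k] N ⊗[k] N)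
    (hanti : ∀ x, TensorProduct.comm k N N (δ x) = - δ x)
    (hcoJ : ∀ x, (TensorProduct.map δ LinearMap.id) (δ x)
        + tCyc k N ((TensorProduct.map δ LinearMap.id) (δ x))
        + tCyc k N (tCyc k N ((TensorProduct.map δ LinearMap.id) (δ x))) = 0)
    (hcoc : ∀ x y, δ ⁅x, y⁆ = tAct k N x (δ y) - tAct k N y (δ x))
    -- δ is nearly coboundary:
    (hnc : ∀ z ∈ Z, δ z = 0)
    -- δ on W has the form δ(e_i) = Σ_α λ_{i,α} e_i∧α + Φ*(e_i) (diagonal D_α's):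
    (lam : V → A → k)
    (P : V → N ⊗[k] N)
    (hP : ∀ i : V, P i ∈ tsub k N Z Z)
    (hform : ∀ i : V, δ (B (Sum.inl i))
      = ∑ a : A, lam i a • (B (Sum.inl i) ⊗ₜ[k] B (Sum.inr a)
          - B (Sum.inr a) ⊗ₜ[k] B (Sum.inl i)) + P i)
    :
    (∀ (i : V) (a : A), lam i a = 0)
    ∧ (∀ i : V, δ (B (Sum.inl i)) ∈ tsub k N Z Z) :=
  stmt18_general k V A N src tgt B hbz hbe hcomplete hcard Z hZ δ hcoc hnc lam P hP hform
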